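/- arXiv:1706.08469 — 3 statements merged into one kernel-verified Lean document; each statement's English description precedes it below -/
import Mathlib

section
/- For all nonnegative integers r and n, F_{3rn} * L_{3rn+3r} = F_{rn} * L_{rn+r} * (5*F_{2rn+r}^2 + (-1)^{nr} * 5*F_{rn+r}^2 - (-1)^{(n-1)r} * 5*F_{rn}^2 + 5*F_r^2 + (-1)^r * 3). -/
open Finset

def L : ℕ → ℤ
  | 0 => 2
  | 1 => 1
  | n + 2 => L (n + 1) + L n

def F (n : ℕ) : ℤ := Nat.fib n

lemma Frec (k : ℕ) : F (k + 2) = F (k + 1) + F k := by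
  unfold F
  rw [Nat.fib_add_two]
  push_cast
  ring

lemma F_add (m k : ℕ) : F (m + k) = F m * F (k + 1) + (F (m + 1) - F m) * F k := by
  induction m using Nat.twoStepInduction with
  | zero => simp [F]
  | one => simp [F, Nat.add_comm 1 k]
  | more m ih1 ih2 =>
      have e1 : m + 2 + k = m + k + 2 := by omega
      have e2 : m + 1 + k = m + k + 1 := by omega
      rw [e2] at ih2
      have ih2' : F (m + k + 1) = F (m + 1) * F (k + 1) + (F (m + 2) - F (m + 1)) * F k := ih2
      have r1 : F (m + 2) = F (m + 1) + F m := Frec m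
      have r2 : F (m + 2 + 1) = F (m + 2) + F (m + 1) := Frec (m + 1)
      rw [e1, Frec (m + k), ih1, ih2', r2, r1]
      ring

lemma cassini (m : ℕ) : F (m + 1) ^ 2 - F (m + 1) * F m - F m ^ 2 = (-1 : ℤ) ^ m := by
  induction m with
  | zero => simp [F]
  | succ m ih =>
      rw [Frec m]
      linear_combination (-1 : ℤ) * ih

lemma L_eq (k : ℕ) : L k = 2 * F (k + 1) - F k := by
  induction k using Nat.twoStepInduction with
  | zero => simp [F, L]
  | one => simp [F, L]
  | more k ih1 ih2 =>
      rw [L, ih1, ih2, Frec (k + 1), Frec k]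
      ring

theorem stmt11 (r n : ℕ) :
    F (3 * r * n) * L (3 * r * n + 3 * r) =
      F (r * n) * L (r * n + r) *
        (5 * F (2 * r * n + r) ^ 2 + (-1 : ℤ) ^ (n * r) * 5 * F (r * n + r) ^ 2 -
          (-1 : ℤ) ^ ((n + 1) * r) * 5 * F (r * n) ^ 2 + 5 * F r ^ 2 + (-1 : ℤ) ^ r * 3) := by
  set a := F (r * n) with ha
  set b := F (r * n + 1) with hb
  set c := F r with hc
  set d := F (r + 1) with hd
  set s := ((-1 : ℤ)) ^ (r * n) with hs
  set t := ((-1 : ℤ)) ^ r with ht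
  have hnr : ((-1 : ℤ)) ^ (n * r) = s := by rw [hs, Nat.mul_comm]
  have hn1r : ((-1 : ℤ)) ^ ((n + 1) * r) = s * t := by
    rw [hs, ht, add_mul, one_mul, pow_add, Nat.mul_comm n r]
  have h1 : b ^ 2 - b * a - a ^ 2 = s := cassini (r * n)
  have h2 : d ^ 2 - d * c - c ^ 2 = t := cassini r
  have h3 : s ^ 2 = 1 := by
    rw [hs, ← pow_mul, Nat.mul_comm (r * n) 2, pow_mul]
    norm_num
  -- basic addition values
  have hA : F (r * n + r) = a * d + (b - a) * c := F_add (r * n) r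
  have hB : F (r * n + r + 1) = a * (c + d) + (b - a) * d := by
    have e : r * n + r + 1 = r * n + (r + 1) := by omega
    rw [e, F_add (r * n) (r + 1), Frec r]
    ring
  have h2mr : F (2 * r * n + r) =
      a * (a * (c + d) + (b - a) * d) + (b - a) * (a * d + (b - a) * c) := by
    have e : 2 * r * n + r = r * n + (r * n + r) := by ring
    rw [e, F_add (r * n) (r * n + r), hB, hA]
  have hF2m : F (r * n + r * n) = a * b + (b - a) * a := F_add (r * n) (r * n)
  have hF2m1 : F (r * n + (r * n) + 1) = a * (a + b) + (b - a) * b := by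
    have e : r * n + r * n + 1 = r * n + (r * n + 1) := by omega
    rw [e, F_add (r * n) (r * n + 1), Frec (r * n)]
    ring
  have h3m : F (3 * r * n) =
      a * (a * (a + b) + (b - a) * b) + (b - a) * (a * b + (b - a) * a) := by
    have e : 3 * r * n = r * n + (r * n + r * n) := by ring
    rw [e, F_add (r * n) (r * n + r * n), hF2m1, hF2m]
  -- values at k = r*n + r
  set A := F (r * n + r) with hAdef
  set B := F (r * n + r + 1) with hBdef
  have hk2 : F (r * n + r + 2) = A + B := by rw [Frec (r * n + r)]; ring
  have hG2 : F ((r * n + r) + (r * n + r)) = A * B + (B - A) * A :=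
    F_add (r * n + r) (r * n + r)
  have hG21 : F ((r * n + r) + (r * n + r) + 1) = A * (A + B) + (B - A) * B := by
    have e : (r * n + r) + (r * n + r) + 1 = (r * n + r) + ((r * n + r) + 1) := by omega
    rw [e, F_add (r * n + r) (r * n + r + 1), hk2]
  have hG22 : F ((r * n + r) + (r * n + r) + 2) =
      (A * B + (B - A) * A) + (A * (A + B) + (B - A) * B) := by
    rw [Frec ((r * n + r) + (r * n + r)), hG2, hG21]
    ring
  have h3k : F (3 * r * n + 3 * r) =
      A * (A * (A + B) + (B - A) * B) + (B - A) * (A * B + (B - A) * A) := by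
    have e : 3 * r * n + 3 * r = (r * n + r) + ((r * n + r) + (r * n + r)) := by ring
    rw [e, F_add (r * n + r) ((r * n + r) + (r * n + r)), hG2, hG21]
  have h3k1 : F (3 * r * n + 3 * r + 1) =
      A * ((A * B + (B - A) * A) + (A * (A + B) + (B - A) * B)) +
        (B - A) * (A * (A + B) + (B - A) * B) := by
    have e : 3 * r * n + 3 * r + 1 = (r * n + r) + ((r * n + r) + (r * n + r) + 1) := by
      ring
    rw [e, F_add (r * n + r) ((r * n + r) + (r * n + r) + 1), hG21, hG22]
  have hLk : L (r * n + r) = 2 * B - A := by rw [L_eq (r * n + r)]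
  have hL3 : L (3 * r * n + 3 * r) =
      2 * (A * ((A * B + (B - A) * A) + (A * (A + B) + (B - A) * B)) +
          (B - A) * (A * (A + B) + (B - A) * B)) -
        (A * (A * (A + B) + (B - A) * B) + (B - A) * (A * B + (B - A) * A)) := by
    rw [L_eq (3 * r * n + 3 * r), h3k, h3k1]
  rw [hnr, hn1r, h3m, hL3, hLk, h2mr, hA, hB]
  linear_combination
    (6*a*b*d^3*s - 9*a*b*c*d^2*s + 7*a*b*c^2*d*s - 2*a*b*c^3*s + 6*a*b^3*d^3 - 9*a*b^3*c*d^2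
      + 17*a*b^3*c^2*d - 7*a*b^3*c^3 - 3*a^2*d^3*s + 12*a^2*c*d^2*s - 11*a^2*c^2*d*s
      + 6*a^2*c^3*s - 9*a^2*b^2*d^3 + 41*a^2*b^2*c*d^2 - 53*a^2*b^2*c^2*d + 33*a^2*b^2*c^3
      - 3*a^3*b*d^3 - 23*a^3*b*c*d^2 + 69*a^3*b*c^2*d - 44*a^3*b*c^3 + 3*a^4*d^3
      - 7*a^4*c*d^2 - 14*a^4*c^2*d + 24*a^4*c^3) * h1 +
    (6*a*b*d*s^2 - 3*a*b*c*s^2 - 3*a^2*d*s^2 + 9*a^2*c*s^2 - 10*a^3*b*d*s + 5*a^3*b*c*s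
      + 5*a^4*d*s - 15*a^4*c*s) * h2 +
    (6*a*b*d*t - 3*a*b*c*t + 10*a*b*c^2*d - 5*a*b*c^3 - 3*a^2*d*t + 9*a^2*c*t
      - 5*a^2*c^2*d + 15*a^2*c^3) * h3
end

section
/- For all positive integers r and n with r even, F_{3r} * (∑_{k=1}^n L_{2rk}^3) = F_{rn} * L_{rn+r} * (5 * L_{rn} * F_{rn+r} * F_{2rn+r} + 4*(L_{2r} + 1)). -/
open Real goldenRatio

theorem cast_F_eq_binet (n : ℕ) : (F n : ℝ) = (φ ^ n - ψ ^ n) / √5 := by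
  simp only [F, Int.cast_natCast, coe_fib_eq]

theorem cast_L_eq_binet (n : ℕ) : (L n : ℝ) = φ ^ n + ψ ^ n := by
  induction n using Nat.twoStepInduction with
  | zero => norm_num [L]
  | one => simp [L, goldenRatio_add_goldenConj]
  | more n ih₀ ih₁ =>
    have step (x : ℝ) (hx : x ^ 2 = x + 1) : x ^ (n + 2) = x ^ (n + 1) + x ^ n := by
      rw [pow_add, hx]; ring
    rw [L, Int.cast_add, ih₀, ih₁, step φ goldenRatio_sq, step ψ goldenConj_sq]
    ring

theorem goldenConj_pow_eq_inv {r : ℕ} (hr : Even r) : ψ ^ r = (φ ^ r)⁻¹ := by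
  refine eq_inv_of_mul_eq_one_left ?_
  rw [← mul_pow, goldenConj_mul_goldenRatio, hr.neg_one_pow]

theorem cast_F_mul_eq {r : ℕ} (hr : Even r) (m : ℕ) :
    (F (r * m) : ℝ) = ((φ ^ r) ^ m - (φ ^ r)⁻¹ ^ m) / √5 := by
  rw [cast_F_eq_binet, pow_mul, pow_mul, goldenConj_pow_eq_inv hr]

theorem cast_L_mul_eq {r : ℕ} (hr : Even r) (m : ℕ) :
    (L (r * m) : ℝ) = (φ ^ r) ^ m + (φ ^ r)⁻¹ ^ m := by
  rw [cast_L_eq_binet, pow_mul, pow_mul, goldenConj_pow_eq_inv hr]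

theorem F_mul_L_cube_eq_sub {r : ℕ} (hr : Even r) (n : ℕ) :
    F (3 * r) * L (2 * r * (n + 1)) ^ 3 =
      F (r * (n + 1)) * L (r * (n + 1) + r) *
          (5 * L (r * (n + 1)) * F (r * (n + 1) + r) * F (2 * r * (n + 1) + r) +
            4 * (L (2 * r) + 1)) -
        F (r * n) * L (r * n + r) *
          (5 * L (r * n) * F (r * n + r) * F (2 * r * n + r) + 4 * (L (2 * r) + 1)) := by
  apply Int.cast_injective (α := ℝ)
  rw [show 2 * r * (n + 1) + r = r * (2 * n + 3) by ring, show 2 * r * (n + 1) = r * (2 * n + 2) by ring,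
    show 2 * r * n + r = r * (2 * n + 1) by ring, show r * (n + 1) + r = r * (n + 2) by ring,
    show r * n + r = r * (n + 1) by ring, show 3 * r = r * 3 by ring, show 2 * r = r * 2 by ring]
  push_cast [cast_F_mul_eq hr, cast_L_mul_eq hr]
  have hs : √5 ^ 2 = 5 := Real.sq_sqrt (by norm_num)
  have hx : φ ^ r ≠ 0 := pow_ne_zero r goldenRatio_ne_zero
  have hs₀ : √5 ≠ 0 := by positivity
  generalize √5 = s at hs hs₀ ⊢
  generalize φ ^ r = x at hx ⊢
  simp only [inv_pow, pow_add, pow_mul', pow_one]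
  have hz : x ^ n ≠ 0 := pow_ne_zero n hx
  generalize x ^ n = z at hz ⊢
  rw [← hs]
  field_simp
  ring

theorem stmt17_general (r n : ℕ) (hre : Even r) :
    F (3 * r) * ∑ k ∈ Finset.Icc 1 n, L (2 * r * k) ^ 3 =
      F (r * n) * L (r * n + r) * (5 * L (r * n) * F (r * n + r) * F (2 * r * n + r) + 4 * (L (2 * r) + 1)) := by
  induction n with
  | zero => simp [F]
  | succ n ih =>
    rw [Finset.sum_Icc_succ_top (by omega), mul_add, ih, F_mul_L_cube_eq_sub hre]
    ring

theorem stmt17 (r n : ℕ) (hr : 0 < r) (hn : 0 < n) (hre : Even r) :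
    F (3 * r) * ∑ k ∈ Finset.Icc 1 n, L (2 * r * k) ^ 3 =
      F (r * n) * L (r * n + r) * (5 * L (r * n) * F (r * n + r) * F (2 * r * n + r) + 4 * (L (2 * r) + 1)) :=
  stmt17_general r n hre
end

section
/- For every positive integer n: if n is even then 4 * (∑_{k=1}^n L_{2k}^3) = 5 * F_n * F_{n+1} * (L_n * L_{n+1} * L_{2n+1} + 16), and if n is odd then 4 * (∑_{k=1}^n L_{2k}^3) = L_n * L_{n+1} * (5 * F_n * F_{n+1} * L_{2n+1} + 16). -/
open Finset

/-!
Put `m = 2n + 1`. Induction on `n` gives `4 ∑_{k ≤ n} L_{2k}³ = L_m³ + 15 L_m - 16`, the inductive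
step being the Cassini identity `L_{m+1}² - L_{m+1} L_m - L_m² = 5` for odd `m`. Both right-hand
sides are this same polynomial in `L_m`: `L_n L_{n+1} = L_m + (-1)ⁿ`, `5 F_n F_{n+1} = L_m - (-1)ⁿ`,
and `(L_m - 1)((L_m + 1) L_m + 16) = L_m³ + 15 L_m - 16`.
-/

theorem cassini_of_add_two {R : Type*} [CommRing R] (u : ℕ → R)
    (hu : ∀ k, u (k + 2) = u (k + 1) + u k) (k : ℕ) :
    u (k + 1) ^ 2 - u (k + 1) * u k - u k ^ 2 = (-1) ^ k * (u 1 ^ 2 - u 1 * u 0 - u 0 ^ 2) := by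
  induction k with
  | zero => ring
  | succ k ih =>
    rw [hu, pow_succ]
    linear_combination -ih

theorem F_add_two (n : ℕ) : F (n + 2) = F (n + 1) + F n := by
  simp only [F, Nat.fib_add_two, Nat.cast_add]
  ring

theorem L_add_two (n : ℕ) : L (n + 2) = L (n + 1) + L n := rfl

theorem F_cassini (n : ℕ) : F (n + 1) ^ 2 - F (n + 1) * F n - F n ^ 2 = (-1) ^ n := by
  simpa [F] using cassini_of_add_two F F_add_two n

theorem L_cassini (n : ℕ) : L (n + 1) ^ 2 - L (n + 1) * L n - L n ^ 2 = -5 * (-1) ^ n := by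
  simpa [L, mul_comm] using cassini_of_add_two L L_add_two n

theorem L_eq_two_mul_F_succ_sub_F (n : ℕ) : L n = 2 * F (n + 1) - F n := by
  induction n using Nat.twoStepInduction with
  | zero => simp [L, F]
  | one => simp [L, F]
  | more n ih₀ ih₁ =>
    rw [L_add_two, ih₀, ih₁, F_add_two (n + 1), F_add_two n]
    ring

theorem L_two_mul_add_one (n : ℕ) :
    L (2 * n + 1) = 4 * F n * F (n + 1) + F (n + 1) ^ 2 - F n ^ 2 := by
  have hodd : F (2 * n + 1) = F (n + 1) ^ 2 + F n ^ 2 := by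
    simp [F, Nat.fib_two_mul_add_one]
  have heven : F (2 * n + 2) = F (n + 1) * (2 * F n + F (n + 1)) := by
    simp [F, Nat.fib_two_mul_add_two]
  rw [L_eq_two_mul_F_succ_sub_F, heven, hodd]
  ring

theorem L_mul_L_succ (n : ℕ) : L n * L (n + 1) = L (2 * n + 1) + (-1) ^ n := by
  rw [L_eq_two_mul_F_succ_sub_F, L_eq_two_mul_F_succ_sub_F (n + 1), F_add_two, L_two_mul_add_one]
  linear_combination F_cassini n

theorem five_mul_F_mul_F_succ (n : ℕ) : 5 * F n * F (n + 1) = L (2 * n + 1) - (-1) ^ n := by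
  rw [L_two_mul_add_one]
  linear_combination -F_cassini n

theorem four_mul_sum_L_two_mul_cube (n : ℕ) :
    4 * ∑ k ∈ Icc 1 n, L (2 * k) ^ 3 = L (2 * n + 1) ^ 3 + 15 * L (2 * n + 1) - 16 := by
  induction n with
  | zero => simp [L]
  | succ n ih =>
    have hcassini : L (2 * n + 2) ^ 2 - L (2 * n + 2) * L (2 * n + 1) - L (2 * n + 1) ^ 2 = 5 := by
      simpa [pow_succ] using L_cassini (2 * n + 1)
    rw [sum_Icc_succ_top (by omega), mul_add, ih,
      show 2 * (n + 1) + 1 = 2 * n + 1 + 2 by ring, L_add_two]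
    linear_combination 3 * L (2 * n + 2) * hcassini

theorem stmt18_general (n : ℕ) :
    (Even n → 4 * ∑ k ∈ Finset.Icc 1 n, L (2 * k) ^ 3 =
      5 * F n * F (n + 1) * (L n * L (n + 1) * L (2 * n + 1) + 16)) ∧
    (Odd n → 4 * ∑ k ∈ Finset.Icc 1 n, L (2 * k) ^ 3 =
      L n * L (n + 1) * (5 * F n * F (n + 1) * L (2 * n + 1) + 16)) := by
  rw [four_mul_sum_L_two_mul_cube, L_mul_L_succ, five_mul_F_mul_F_succ]
  constructor
  · intro hn
    rw [hn.neg_one_pow]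
    ring
  · intro hn
    rw [hn.neg_one_pow]
    ring

theorem stmt18 (n : ℕ) (hn : 0 < n) :
    (Even n → 4 * ∑ k ∈ Finset.Icc 1 n, L (2 * k) ^ 3 =
      5 * F n * F (n + 1) * (L n * L (n + 1) * L (2 * n + 1) + 16)) ∧
    (Odd n → 4 * ∑ k ∈ Finset.Icc 1 n, L (2 * k) ^ 3 =
      L n * L (n + 1) * (5 * F n * F (n + 1) * L (2 * n + 1) + 16)) :=
  stmt18_general n
end
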